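/- Conversely: if α, β, φ₃, ψ₃ are smooth functions on Ω satisfying Δ(λ)α + k²α = 0, Δ(λ)β + k²β = 0, Δ(λ)φ₃ + k²φ₃ = 0, Δ(λ)ψ₃ + k²ψ₃ = 0 with k² − λ² ≠ 0, and φ₁, φ₂, ψ₁, ψ₂ are defined by the formulas φ₁ = (k²−λ²)^{−1}[iλ∂₁φ₃ + ik∂₂ψ₃ − iλ∂₂α + ik∂₁β], φ₂ = (k²−λ²)^{−1}[iλ∂₂φ₃ − ik∂₁ψ₃ + iλ∂₁α + ik∂₂β], ψ₁ = (k²−λ²)^{−1}[−ik∂₂φ₃ + iλ∂₁ψ₃ − ik∂₁α − iλ∂₂β], ψ₂ = (k²−λ²)^{−1}[ik∂₁φ₃ + iλ∂₂ψ₃ − ik∂₂α + iλ∂₁β], then (φ, α, ψ, β) satisfies the pencil equations 𝔄(λ,k)(φ,α,ψ,β) = 0 on Ω. -/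

import Mathlib

noncomputable def pd2 (i : Fin 2) (f : (Fin 2 → ℝ) → ℂ) (x : Fin 2 → ℝ) : ℂ :=
  fderiv ℝ f x (Pi.single i 1)

noncomputable def gradl (lam : ℂ) (a : (Fin 2 → ℝ) → ℂ) (x : Fin 2 → ℝ) : Fin 3 → ℂ :=
  ![pd2 0 a x, pd2 1 a x, Complex.I * lam * a x]

noncomputable def divl (lam : ℂ) (F : (Fin 2 → ℝ) → Fin 3 → ℂ) (x : Fin 2 → ℝ) : ℂ :=
  pd2 0 (fun y => F y 0) x + pd2 1 (fun y => F y 1) x + Complex.I * lam * F x 2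

noncomputable def rotl (lam : ℂ) (F : (Fin 2 → ℝ) → Fin 3 → ℂ) (x : Fin 2 → ℝ) : Fin 3 → ℂ :=
  ![pd2 1 (fun y => F y 2) x - Complex.I * lam * F x 1,
    Complex.I * lam * F x 0 - pd2 0 (fun y => F y 2) x,
    pd2 0 (fun y => F y 1) x - pd2 1 (fun y => F y 0) x]

noncomputable def lapl (lam : ℂ) (f : (Fin 2 → ℝ) → ℂ) (x : Fin 2 → ℝ) : ℂ :=
  pd2 0 (pd2 0 f) x + pd2 1 (pd2 1 f) x - lam ^ 2 * f x

def ccross (a b : Fin 3 → ℂ) : Fin 3 → ℂ :=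
  ![a 1 * b 2 - a 2 * b 1, a 2 * b 0 - a 0 * b 2, a 0 * b 1 - a 1 * b 0]

/-! With `c = (k² - λ²)⁻¹` and `∇⊥ = (∂₂, -∂₁)`, the formulas say that the transverse parts are
`φ_T = c (∇(iλφ₃ + ikβ) + ∇⊥(ikψ₃ - iλα))` and `ψ_T = c (∇(iλψ₃ - ikα) - ∇⊥(ikφ₃ + iλβ))`.
Since `div (∇u + ∇⊥v) = Δu` and `curl (∇u + ∇⊥v) = -Δv`, the Helmholtz equations
`Δu = (λ² - k²) u` turn the divergence equations and the axial components of the curl equations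
into algebraic identities; the transverse components of the curl equations are algebraic from the
start. The pencil is invariant under `(φ, α, ψ, β, k) ↦ (ψ, β, φ, α, -k)`, so it suffices to
check the two equations involving `rot ψ` and `div ψ`. -/

open Finset

noncomputable def lap2 (f : (Fin 2 → ℝ) → ℂ) (x : Fin 2 → ℝ) : ℂ :=
  pd2 0 (pd2 0 f) x + pd2 1 (pd2 1 f) x

section PartialDerivatives

variable {f g : (Fin 2 → ℝ) → ℂ} {x : Fin 2 → ℝ}

theorem pd2_congr_of_eqOn {U : Set (Fin 2 → ℝ)} (hU : IsOpen U) (hx : x ∈ U) (h : Set.EqOn f g U)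
    (i : Fin 2) : pd2 i f x = pd2 i g x := by
  rw [pd2, pd2, (Filter.eventuallyEq_of_mem (hU.mem_nhds hx) h).fderiv_eq]

theorem pd2_add (hf : DifferentiableAt ℝ f x) (hg : DifferentiableAt ℝ g x) (i : Fin 2) :
    pd2 i (fun y => f y + g y) x = pd2 i f x + pd2 i g x := by
  simp [pd2, fderiv_fun_add hf hg]

theorem pd2_sub (hf : DifferentiableAt ℝ f x) (hg : DifferentiableAt ℝ g x) (i : Fin 2) :
    pd2 i (fun y => f y - g y) x = pd2 i f x - pd2 i g x := by
  simp [pd2, fderiv_fun_sub hf hg]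

theorem pd2_sum {ι : Type*} [Fintype ι] {u : ι → (Fin 2 → ℝ) → ℂ}
    (hu : ∀ i, DifferentiableAt ℝ (u i) x) (a : ι → ℂ) (j : Fin 2) :
    pd2 j (fun y => ∑ i, a i * u i y) x = ∑ i, a i * pd2 j (u i) x := by
  have hd : ∀ i ∈ univ, DifferentiableAt ℝ (fun y => a i * u i y) x :=
    fun i _ => (hu i).const_mul (a i)
  simp [pd2, fderiv_fun_sum hd, fderiv_const_mul (hu _)]

theorem differentiableAt_pd2 (hf : ContDiffAt ℝ 2 f x) (i : Fin 2) :
    DifferentiableAt ℝ (pd2 i f) x :=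
  ((hf.fderiv_right (m := 1) le_rfl).clm_apply contDiffAt_const).differentiableAt one_ne_zero

theorem pd2_pd2 (hf : DifferentiableAt ℝ (fderiv ℝ f) x) (i j : Fin 2) :
    pd2 i (pd2 j f) x = fderiv ℝ (fderiv ℝ f) x (Pi.single i 1) (Pi.single j 1) := by
  change fderiv ℝ (fun y => fderiv ℝ f y (Pi.single j 1)) x (Pi.single i 1) = _
  simp [fderiv_clm_apply hf (differentiableAt_const _)]

theorem pd2_comm (hf : ContDiffAt ℝ 2 f x) (i j : Fin 2) :
    pd2 i (pd2 j f) x = pd2 j (pd2 i f) x := by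
  have hd : DifferentiableAt ℝ (fderiv ℝ f) x :=
    (hf.fderiv_right (m := 1) le_rfl).differentiableAt one_ne_zero
  rw [pd2_pd2 hd, pd2_pd2 hd]
  exact hf.isSymmSndFDerivAt (by simp [minSmoothness_of_isRCLikeNormedField]) _ _

end PartialDerivatives

section GradientPlusRotatedGradient

variable {ι κ : Type*} [Fintype ι] [Fintype κ] {U : Set (Fin 2 → ℝ)} {x : Fin 2 → ℝ}
  {u : ι → (Fin 2 → ℝ) → ℂ} {v : κ → (Fin 2 → ℝ) → ℂ} {a : ι → ℂ} {b : κ → ℂ}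
  {w₀ w₁ : (Fin 2 → ℝ) → ℂ}

theorem differentiableAt_sum_mul_pd2 (hu : ∀ i, ContDiffAt ℝ 2 (u i) x) (a : ι → ℂ)
    (j : Fin 2) : DifferentiableAt ℝ (fun y => ∑ i, a i * pd2 j (u i) y) x :=
  DifferentiableAt.fun_sum fun i _ => (differentiableAt_pd2 (hu i) j).const_mul (a i)

theorem pd2_sum_mul_pd2 (hu : ∀ i, ContDiffAt ℝ 2 (u i) x) (a : ι → ℂ) (j k : Fin 2) :
    pd2 j (fun y => ∑ i, a i * pd2 k (u i) y) x = ∑ i, a i * pd2 j (pd2 k (u i)) x :=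
  pd2_sum (fun i => differentiableAt_pd2 (hu i) k) a j

theorem div_curl_eq_sum_lap2_of_eqOn (hU : IsOpen U) (hx : x ∈ U)
    (hu : ∀ i, ContDiffAt ℝ 2 (u i) x) (hv : ∀ i, ContDiffAt ℝ 2 (v i) x)
    (hw₀ : Set.EqOn w₀ (fun y => ∑ i, a i * pd2 0 (u i) y + ∑ i, b i * pd2 1 (v i) y) U)
    (hw₁ : Set.EqOn w₁ (fun y => ∑ i, a i * pd2 1 (u i) y - ∑ i, b i * pd2 0 (v i) y) U) :
    pd2 0 w₀ x + pd2 1 w₁ x = ∑ i, a i * lap2 (u i) x ∧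
      pd2 0 w₁ x - pd2 1 w₀ x = -∑ i, b i * lap2 (v i) x := by
  have hw₀' (j : Fin 2) : pd2 j w₀ x =
      ∑ i, a i * pd2 j (pd2 0 (u i)) x + ∑ i, b i * pd2 j (pd2 1 (v i)) x := by
    rw [pd2_congr_of_eqOn hU hx hw₀, pd2_add (differentiableAt_sum_mul_pd2 hu a 0)
      (differentiableAt_sum_mul_pd2 hv b 1), pd2_sum_mul_pd2 hu, pd2_sum_mul_pd2 hv]
  have hw₁' (j : Fin 2) : pd2 j w₁ x =
      ∑ i, a i * pd2 j (pd2 1 (u i)) x - ∑ i, b i * pd2 j (pd2 0 (v i)) x := by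
    rw [pd2_congr_of_eqOn hU hx hw₁, pd2_sub (differentiableAt_sum_mul_pd2 hu a 1)
      (differentiableAt_sum_mul_pd2 hv b 0), pd2_sum_mul_pd2 hu, pd2_sum_mul_pd2 hv]
  simp only [hw₀', hw₁', lap2, mul_add, sum_add_distrib, pd2_comm (hu _) 1 0,
    pd2_comm (hv _) 1 0]
  constructor <;> ring

end GradientPlusRotatedGradient

theorem lap2_eq_of_helmholtz {lam k : ℂ} {f : (Fin 2 → ℝ) → ℂ} {x : Fin 2 → ℝ}
    (h : lapl lam f x + k ^ 2 * f x = 0) : lap2 f x = (lam ^ 2 - k ^ 2) * f x := by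
  rw [lapl] at h
  rw [lap2]
  linear_combination h

theorem rotl_divl_eqns_of_axial_helmholtz
    {Ω : Set (Fin 2 → ℝ)} (hΩ : IsOpen Ω) {k lam : ℂ} (hklam : k ^ 2 - lam ^ 2 ≠ 0)
    {φ ψ : (Fin 2 → ℝ) → Fin 3 → ℂ} {α β : (Fin 2 → ℝ) → ℂ}
    (hα : ContDiffOn ℝ (⊤ : ℕ∞) α Ω) (hβ : ContDiffOn ℝ (⊤ : ℕ∞) β Ω)
    (hφ3 : ContDiffOn ℝ (⊤ : ℕ∞) (fun y => φ y 2) Ω)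
    (hψ3 : ContDiffOn ℝ (⊤ : ℕ∞) (fun y => ψ y 2) Ω)
    (hHα : ∀ x ∈ Ω, lapl lam α x + k ^ 2 * α x = 0)
    (hHβ : ∀ x ∈ Ω, lapl lam β x + k ^ 2 * β x = 0)
    (hHφ3 : ∀ x ∈ Ω, lapl lam (fun y => φ y 2) x + k ^ 2 * φ x 2 = 0)
    (hHψ3 : ∀ x ∈ Ω, lapl lam (fun y => ψ y 2) x + k ^ 2 * ψ x 2 = 0)
    (hφ0 : ∀ x ∈ Ω, φ x 0 = (k ^ 2 - lam ^ 2)⁻¹ *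
        (Complex.I * lam * pd2 0 (fun y => φ y 2) x + Complex.I * k * pd2 1 (fun y => ψ y 2) x
          - Complex.I * lam * pd2 1 α x + Complex.I * k * pd2 0 β x))
    (hφ1 : ∀ x ∈ Ω, φ x 1 = (k ^ 2 - lam ^ 2)⁻¹ *
        (Complex.I * lam * pd2 1 (fun y => φ y 2) x - Complex.I * k * pd2 0 (fun y => ψ y 2) x
          + Complex.I * lam * pd2 0 α x + Complex.I * k * pd2 1 β x))
    (hψ0 : ∀ x ∈ Ω, ψ x 0 = (k ^ 2 - lam ^ 2)⁻¹ *
        (-(Complex.I * k * pd2 1 (fun y => φ y 2) x) + Complex.I * lam * pd2 0 (fun y => ψ y 2) x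
          - Complex.I * k * pd2 0 α x - Complex.I * lam * pd2 1 β x))
    (hψ1 : ∀ x ∈ Ω, ψ x 1 = (k ^ 2 - lam ^ 2)⁻¹ *
        (Complex.I * k * pd2 0 (fun y => φ y 2) x + Complex.I * lam * pd2 1 (fun y => ψ y 2) x
          - Complex.I * k * pd2 1 α x + Complex.I * lam * pd2 0 β x))
    {x : Fin 2 → ℝ} (hx : x ∈ Ω) :
    (∀ j, Complex.I * rotl lam ψ x j + Complex.I * gradl lam β x j - k * φ x j = 0) ∧
      -Complex.I * divl lam ψ x - k * α x = 0 := by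
  have smooth : ∀ f : (Fin 2 → ℝ) → ℂ, ContDiffOn ℝ (⊤ : ℕ∞) f Ω → ContDiffAt ℝ 2 f x :=
    fun f hf => (hf.contDiffAt (hΩ.mem_nhds hx)).of_le (WithTop.coe_le_coe.mpr le_top)
  have hc : (k ^ 2 - lam ^ 2)⁻¹ * (k ^ 2 - lam ^ 2) = 1 := inv_mul_cancel₀ hklam
  set c := (k ^ 2 - lam ^ 2)⁻¹
  obtain ⟨hdiv, hcurl⟩ := div_curl_eq_sum_lap2_of_eqOn (w₀ := fun y => ψ y 0)
    (w₁ := fun y => ψ y 1) (u := ![fun y => ψ y 2, α]) (v := ![fun y => φ y 2, β])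
    (a := ![c * Complex.I * lam, -(c * Complex.I * k)])
    (b := ![-(c * Complex.I * k), -(c * Complex.I * lam)]) hΩ hx
    (by simp [Fin.forall_fin_two, smooth, hψ3, hα])
    (by simp [Fin.forall_fin_two, smooth, hφ3, hβ])
    (fun y hy => by simp [Fin.sum_univ_two, hψ0 y hy]; ring)
    (fun y hy => by simp [Fin.sum_univ_two, hψ1 y hy]; ring)
  simp only [Fin.sum_univ_two, Matrix.cons_val_zero, Matrix.cons_val_one,
    lap2_eq_of_helmholtz (hHψ3 x hx), lap2_eq_of_helmholtz (hHα x hx),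
    lap2_eq_of_helmholtz (hHφ3 x hx), lap2_eq_of_helmholtz (hHβ x hx)] at hdiv hcurl
  have hI := Complex.I_sq
  have hφx0 := hφ0 x hx
  have hφx1 := hφ1 x hx
  have hψx0 := hψ0 x hx
  have hψx1 := hψ1 x hx
  refine ⟨fun j => ?_, ?_⟩
  · fin_cases j <;> simp [rotl, gradl] <;> grind
  · rw [divl]
    grind

theorem pencil_from_axial_helmholtz
    (Ω : Set (Fin 2 → ℝ)) (hΩ : IsOpen Ω) (k lam : ℂ) (hklam : k ^ 2 - lam ^ 2 ≠ 0)
    (φ ψ : (Fin 2 → ℝ) → Fin 3 → ℂ) (α β : (Fin 2 → ℝ) → ℂ)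
    (hα : ContDiffOn ℝ (⊤ : ℕ∞) α Ω) (hβ : ContDiffOn ℝ (⊤ : ℕ∞) β Ω)
    (hφ3 : ContDiffOn ℝ (⊤ : ℕ∞) (fun y => φ y 2) Ω)
    (hψ3 : ContDiffOn ℝ (⊤ : ℕ∞) (fun y => ψ y 2) Ω)
    (hHα : ∀ x ∈ Ω, lapl lam α x + k ^ 2 * α x = 0)
    (hHβ : ∀ x ∈ Ω, lapl lam β x + k ^ 2 * β x = 0)
    (hHφ3 : ∀ x ∈ Ω, lapl lam (fun y => φ y 2) x + k ^ 2 * φ x 2 = 0)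
    (hHψ3 : ∀ x ∈ Ω, lapl lam (fun y => ψ y 2) x + k ^ 2 * ψ x 2 = 0)
    (hφ0 : ∀ x ∈ Ω, φ x 0 = (k ^ 2 - lam ^ 2)⁻¹ *
        (Complex.I * lam * pd2 0 (fun y => φ y 2) x + Complex.I * k * pd2 1 (fun y => ψ y 2) x
          - Complex.I * lam * pd2 1 α x + Complex.I * k * pd2 0 β x))
    (hφ1 : ∀ x ∈ Ω, φ x 1 = (k ^ 2 - lam ^ 2)⁻¹ *
        (Complex.I * lam * pd2 1 (fun y => φ y 2) x - Complex.I * k * pd2 0 (fun y => ψ y 2) x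
          + Complex.I * lam * pd2 0 α x + Complex.I * k * pd2 1 β x))
    (hψ0 : ∀ x ∈ Ω, ψ x 0 = (k ^ 2 - lam ^ 2)⁻¹ *
        (-(Complex.I * k * pd2 1 (fun y => φ y 2) x) + Complex.I * lam * pd2 0 (fun y => ψ y 2) x
          - Complex.I * k * pd2 0 α x - Complex.I * lam * pd2 1 β x))
    (hψ1 : ∀ x ∈ Ω, ψ x 1 = (k ^ 2 - lam ^ 2)⁻¹ *
        (Complex.I * k * pd2 0 (fun y => φ y 2) x + Complex.I * lam * pd2 1 (fun y => ψ y 2) x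
          - Complex.I * k * pd2 1 α x + Complex.I * lam * pd2 0 β x)) :
    ∀ x ∈ Ω,
      (∀ j, Complex.I * rotl lam ψ x j + Complex.I * gradl lam β x j - k * φ x j = 0) ∧
      (-Complex.I * divl lam ψ x - k * α x = 0) ∧
      (∀ j, -Complex.I * rotl lam φ x j - Complex.I * gradl lam α x j - k * ψ x j = 0) ∧
      (Complex.I * divl lam φ x - k * β x = 0) := by
  intro x hx
  have hk : (-k) ^ 2 = k ^ 2 := neg_sq k
  obtain ⟨hrotψ, hdivψ⟩ := rotl_divl_eqns_of_axial_helmholtz hΩ hklam hα hβ hφ3 hψ3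
    hHα hHβ hHφ3 hHψ3 hφ0 hφ1 hψ0 hψ1 hx
  obtain ⟨hrotφ, hdivφ⟩ := rotl_divl_eqns_of_axial_helmholtz (k := -k) (lam := lam) hΩ
    (by rwa [hk]) hβ hα hψ3 hφ3
    (by simpa [hk]) (by simpa [hk]) (by simpa [hk]) (by simpa [hk])
    (fun y hy => by rw [hψ0 y hy, hk]; ring) (fun y hy => by rw [hψ1 y hy, hk]; ring)
    (fun y hy => by rw [hφ0 y hy, hk]; ring) (fun y hy => by rw [hφ1 y hy, hk]; ring) hx
  exact ⟨hrotψ, hdivψ, fun j => by linear_combination -hrotφ j, by linear_combination -hdivφ⟩
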